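/- arXiv:2201.07671 — 13 statements merged into one kernel-verified Lean document; each statement's English description precedes it below -/
import Mathlib

section
/- Let V be a real normed linear space. Define V' = V × ℝ with positive cone C = {(v, α) : ‖v‖ ≤ α}. Then C is a proper, generating, Archimedean cone, e = (0,1) is an order unit, and the associated order unit norm satisfies ‖(v, α)‖_e = ‖v‖ + |α| for all (v, α) ∈ V'. -/
/-- The cone obtained by adjoining an order unit to a normed space. -/
def dayCone (V : Type*) [NormedAddCommGroup V] : Set (V × ℝ) :=
  {p | ‖p.1‖ ≤ p.2}

theorem Real.sInf_setOf_pos_and_le {a : ℝ} (ha : 0 ≤ a) :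
    sInf {r : ℝ | 0 < r ∧ a ≤ r} = a := by
  refine csInf_eq_of_forall_ge_of_forall_gt_exists_lt ⟨a + 1, by linarith, by linarith⟩
    (fun r hr => hr.2) fun w hw => ⟨(a + w) / 2, ⟨by linarith, by linarith⟩, by linarith⟩

namespace dayCone

variable {V : Type*} [NormedAddCommGroup V]

@[simp]
theorem mem_iff (p : V × ℝ) : p ∈ dayCone V ↔ ‖p.1‖ ≤ p.2 := Iff.rfl

theorem add_mem {x y : V × ℝ} (hx : x ∈ dayCone V) (hy : y ∈ dayCone V) :
    x + y ∈ dayCone V :=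
  (norm_add_le _ _).trans (add_le_add hx hy)

theorem smul_mem [NormedSpace ℝ V] {x : V × ℝ} (hx : x ∈ dayCone V) {r : ℝ} (hr : 0 ≤ r) :
    r • x ∈ dayCone V := by
  simp only [mem_iff, Prod.smul_fst, Prod.smul_snd, norm_smul, Real.norm_of_nonneg hr,
    smul_eq_mul]
  exact mul_le_mul_of_nonneg_left hx hr

theorem inter_neg : dayCone V ∩ -dayCone V = {0} := by
  ext x
  simp only [Set.mem_inter_iff, Set.mem_neg, mem_iff, Prod.fst_neg, Prod.snd_neg, norm_neg,
    Set.mem_singleton_iff]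
  constructor
  · rintro ⟨h, h'⟩
    have hx₁ : ‖x.1‖ = 0 := by linarith [norm_nonneg x.1]
    exact Prod.ext (norm_eq_zero.mp hx₁) (show x.2 = 0 by linarith)
  · rintro rfl
    simp

section Unit

variable [Module ℝ V]

theorem smul_unit_mem_iff (r : ℝ) : r • ((0, 1) : V × ℝ) ∈ dayCone V ↔ 0 ≤ r := by
  simp

theorem of_forall_add_smul_unit_mem {x : V × ℝ}
    (hx : ∀ r : ℝ, 0 < r → x + r • ((0, 1) : V × ℝ) ∈ dayCone V) : x ∈ dayCone V :=
  le_of_forall_pos_le_add fun r hr => by simpa using hx r hr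

/-- `-r e ≤ p ≤ r e` in the cone order says exactly that `‖p.1‖ + |p.2| ≤ r`. -/
theorem smul_unit_sub_mem_and_smul_unit_add_mem_iff (p : V × ℝ) (r : ℝ) :
    (r • ((0, 1) : V × ℝ) - p ∈ dayCone V ∧ r • ((0, 1) : V × ℝ) + p ∈ dayCone V) ↔
      ‖p.1‖ + |p.2| ≤ r := by
  simp only [mem_iff, Prod.fst_sub, Prod.snd_sub, Prod.fst_add, Prod.snd_add, Prod.smul_mk,
    smul_zero, smul_eq_mul, mul_one, zero_sub, zero_add, norm_neg]
  constructor
  · rintro ⟨h, h'⟩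
    rcases abs_cases p.2 with ⟨hp, -⟩ | ⟨hp, -⟩ <;> rw [hp] <;> linarith
  · intro h
    exact ⟨by linarith [le_abs_self p.2], by linarith [neg_abs_le p.2]⟩

theorem exists_pos_smul_unit_sub_mem (x : V × ℝ) :
    ∃ r : ℝ, 0 < r ∧ r • ((0, 1) : V × ℝ) - x ∈ dayCone V :=
  ⟨‖x.1‖ + |x.2| + 1, by positivity,
    ((smul_unit_sub_mem_and_smul_unit_add_mem_iff x _).mpr (by linarith)).1⟩

theorem exists_sub_eq (x : V × ℝ) : ∃ a ∈ dayCone V, ∃ b ∈ dayCone V, x = a - b := by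
  set r := ‖x.1‖ + |x.2|
  refine ⟨r • (0, 1) + x, ((smul_unit_sub_mem_and_smul_unit_add_mem_iff x r).mpr le_rfl).2,
    r • (0, 1), (smul_unit_mem_iff r).mpr (by positivity), by abel⟩

theorem orderUnitNorm_eq (p : V × ℝ) :
    sInf {r : ℝ | 0 < r ∧ r • ((0, 1) : V × ℝ) - p ∈ dayCone V ∧
      r • ((0, 1) : V × ℝ) + p ∈ dayCone V} = ‖p.1‖ + |p.2| := by
  simp_rw [smul_unit_sub_mem_and_smul_unit_add_mem_iff]
  exact Real.sInf_setOf_pos_and_le (by positivity)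

end Unit

end dayCone

/-- M. M. Day's construction: `V × ℝ` with cone `{(v, α) : ‖v‖ ≤ α}` is a proper,
generating, Archimedean cone, `e = (0,1)` is an order unit, and the order unit norm
is `‖(v, α)‖ₑ = ‖v‖ + |α|`. -/
theorem stmt0 {V : Type*} [NormedAddCommGroup V] [NormedSpace ℝ V] :
    (∀ x ∈ dayCone V, ∀ y ∈ dayCone V, x + y ∈ dayCone V) ∧
    (∀ x ∈ dayCone V, ∀ r : ℝ, 0 ≤ r → r • x ∈ dayCone V) ∧
    (dayCone V ∩ (-(dayCone V)) = {0}) ∧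
    (∀ x : V × ℝ, ∃ a ∈ dayCone V, ∃ b ∈ dayCone V, x = a - b) ∧
    (∀ x : V × ℝ, (∀ r : ℝ, 0 < r → x + r • ((0, 1) : V × ℝ) ∈ dayCone V) →
      x ∈ dayCone V) ∧
    (∀ x : V × ℝ, ∃ r : ℝ, 0 < r ∧ r • ((0, 1) : V × ℝ) - x ∈ dayCone V) ∧
    (∀ p : V × ℝ,
      sInf {r : ℝ | 0 < r ∧ r • ((0, 1) : V × ℝ) - p ∈ dayCone V ∧
        r • ((0, 1) : V × ℝ) + p ∈ dayCone V} = ‖p.1‖ + |p.2|) :=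
  ⟨fun _ hx _ hy => dayCone.add_mem hx hy, fun _ hx _ hr => dayCone.smul_mem hx hr,
    dayCone.inter_neg, dayCone.exists_sub_eq, fun _ => dayCone.of_forall_add_smul_unit_mem,
    dayCone.exists_pos_smul_unit_sub_mem, dayCone.orderUnitNorm_eq⟩
end

section
/- Let V be a real normed linear space and V' = V × ℝ ordered by the cone {(v, α) : ‖v‖ ≤ α}. Then B = {(v, 1) : ‖v‖ ≤ 1} is a base for the cone, and the convex hull of B ∪ (-B) equals {(x, α) : ‖x‖ ≤ 1, |α| ≤ 1}; consequently the associated base norm is ‖(v, α)‖_B = max{‖v‖, |α|}. -/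
/-- The set `B = {(v, 1) : ‖v‖ ≤ 1}`. -/
def dayBase (V : Type*) [NormedAddCommGroup V] : Set (V × ℝ) :=
  {p | ‖p.1‖ ≤ 1 ∧ p.2 = 1}

/-! Every nonzero `(v, α)` in the cone has `α > 0` and is `α • (α⁻¹ • v, 1)`; the scale is forced
by the second coordinate. The set `{(x, α) : ‖x‖ ≤ 1, |α| ≤ 1}` is the closed unit ball of the
sup norm on `V × ℝ`, and `(x, α) = (1 + α)/2 • (x, 1) + (1 - α)/2 • (x, -1)` shows that it lies in
the convex hull of `B ∪ -B`. The base norm is then the gauge of the unit ball, i.e. the norm. -/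

open Metric

section DayCone

variable {V : Type*} [NormedAddCommGroup V]

lemma dayBase_eq_prod : dayBase V = closedBall 0 1 ×ˢ {1} := by
  ext ⟨v, α⟩
  simp [dayBase]

lemma convex_dayBase [NormedSpace ℝ V] : Convex ℝ (dayBase V) := by
  rw [dayBase_eq_prod]
  exact (convex_closedBall 0 1).prod (convex_singleton 1)

lemma setOf_norm_fst_le_one_and_abs_snd_le_one :
    {p : V × ℝ | ‖p.1‖ ≤ 1 ∧ |p.2| ≤ 1} = closedBall 0 1 := by
  ext p
  simp [Prod.norm_def]

lemma pos_snd_of_mem_dayCone {x : V × ℝ} (hx : x ∈ dayCone V) (hne : x ≠ 0) : 0 < x.2 := by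
  obtain ⟨v, α⟩ := x
  have hv : ‖v‖ ≤ α := hx
  refine (norm_nonneg v |>.trans hv).lt_of_ne fun hα ↦ hne ?_
  have hv0 : v = 0 := norm_le_zero_iff.mp (hα ▸ hv)
  simp [hv0, ← hα]

lemma existsUnique_smul_mem_dayBase [NormedSpace ℝ V] {x : V × ℝ} (hx : x ∈ dayCone V)
    (hne : x ≠ 0) : ∃! p : ℝ × (V × ℝ), 0 < p.1 ∧ p.2 ∈ dayBase V ∧ x = p.1 • p.2 := by
  obtain ⟨v, α⟩ := x
  have hα : 0 < α := pos_snd_of_mem_dayCone hx hne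
  have hv : ‖v‖ ≤ α := hx
  refine ⟨(α, (α⁻¹ • v, 1)), ⟨hα, ⟨?_, rfl⟩, ?_⟩, ?_⟩
  · rw [norm_smul, Real.norm_eq_abs, abs_of_pos (inv_pos.2 hα), inv_mul_le_iff₀ hα, mul_one]
    exact hv
  · simp [smul_smul, mul_inv_cancel₀ hα.ne']
  · rintro ⟨l, b, β⟩ ⟨hl, ⟨-, rfl⟩, heq⟩
    simp only [Prod.smul_mk, Prod.mk.injEq, smul_eq_mul, mul_one] at heq
    obtain ⟨rfl, rfl⟩ := heq
    simp [smul_smul, inv_mul_cancel₀ hl.ne']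

lemma convexHull_dayBase_union_neg [NormedSpace ℝ V] :
    convexHull ℝ (dayBase V ∪ -dayBase V) = closedBall 0 1 := by
  have hB : dayBase V ⊆ closedBall 0 1 := by
    rw [dayBase_eq_prod, ← setOf_norm_fst_le_one_and_abs_snd_le_one]
    rintro ⟨v, α⟩ ⟨hv, rfl⟩
    simpa using hv
  refine subset_antisymm (convexHull_min (Set.union_subset hB ?_) (convex_closedBall 0 1)) ?_
  · intro p hp
    simpa using hB hp
  rw [← setOf_norm_fst_le_one_and_abs_snd_le_one]
  rintro ⟨x, α⟩ ⟨hx, hα⟩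
  rw [abs_le] at hα
  have hpos : (x, (1 : ℝ)) ∈ convexHull ℝ (dayBase V ∪ -dayBase V) :=
    subset_convexHull ℝ _ (Or.inl ⟨hx, rfl⟩)
  have hneg : (x, (-1 : ℝ)) ∈ convexHull ℝ (dayBase V ∪ -dayBase V) :=
    subset_convexHull ℝ _ (Or.inr ⟨by simpa using hx, by simp⟩)
  convert convex_convexHull ℝ _ hpos hneg (a := (1 + α) / 2) (b := (1 - α) / 2)
    (by linarith) (by linarith) (by ring) using 1
  ext
  · simp only [Prod.fst_add, Prod.smul_fst]
    module
  · simp only [Prod.snd_add, Prod.smul_snd, smul_eq_mul]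
    ring

end DayCone

/-- `B = {(v,1) : ‖v‖ ≤ 1}` is a base for the cone `{(v, α) : ‖v‖ ≤ α}`, the convex
hull of `B ∪ -B` is `{(x, α) : ‖x‖ ≤ 1, |α| ≤ 1}`, and the associated base norm
(Minkowski functional of `conv (B ∪ -B)`) is `max ‖v‖ |α|`. -/
theorem stmt1 {V : Type*} [NormedAddCommGroup V] [NormedSpace ℝ V] :
    Convex ℝ (dayBase V) ∧
    (∀ x ∈ dayCone V, x ≠ 0 →
      ∃! p : ℝ × (V × ℝ), 0 < p.1 ∧ p.2 ∈ dayBase V ∧ x = p.1 • p.2) ∧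
    (convexHull ℝ (dayBase V ∪ -(dayBase V)) =
      {p : V × ℝ | ‖p.1‖ ≤ 1 ∧ |p.2| ≤ 1}) ∧
    (∀ p : V × ℝ,
      gauge (convexHull ℝ (dayBase V ∪ -(dayBase V))) p = max ‖p.1‖ |p.2|) := by
  refine ⟨convex_dayBase, fun x hx hne ↦ existsUnique_smul_mem_dayBase hx hne, ?_, fun p ↦ ?_⟩
  · rw [convexHull_dayBase_union_neg, setOf_norm_fst_le_one_and_abs_snd_le_one]
  · rw [convexHull_dayBase_union_neg, gauge_closedBall zero_le_one, div_one, Prod.norm_def,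
      Real.norm_eq_abs]
end

section
/- Let C₀ be a nonempty, radially compact, absolutely convex subset of a real vector space X, and let X₀ = span(C₀) = ⋃ₙ nC₀. Then for each nonzero x ∈ X₀ there exist a unique lead point c of C₀ and a unique α > 0 such that x = αc. -/
/-- A set `S` is radially compact if for every nonzero `x`, `{α : ℝ | α • x ∈ S}` is
compact in `ℝ`. -/
def RadiallyCompact {X : Type*} [AddCommGroup X] [Module ℝ X] (S : Set X) : Prop :=
  ∀ x : X, x ≠ 0 → IsCompact {α : ℝ | α • x ∈ S}

/-- For a convex set `C` containing `0`, `x ∈ C` is a lead point of `C` if `x = λ • y`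
with `y ∈ C`, `λ ∈ [0,1]` implies `λ = 1` and `y = x`. -/
def LeadPoint {X : Type*} [AddCommGroup X] [Module ℝ X] (C : Set X) (x : X) : Prop :=
  x ∈ C ∧ ∀ y ∈ C, ∀ l : ℝ, l ∈ Set.Icc (0 : ℝ) 1 → x = l • y → l = 1 ∧ y = x

/-!
Fix `x ≠ 0` in the span and look at the ray `S = {α | α • x ∈ C₀}`. Since `C₀` is absolutely convex,
its span is the union of the dilates `t⁻¹ • C₀`, `t > 0`, so `S` contains some `t > 0`; radial
compactness makes `S` compact, so it has a greatest element `m > 0`.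
A point `a • x` with `a > 0` is a lead point exactly when `a` is the greatest element of `S`:
pulling a lead point back towards the origin along the ray is what the definition forbids. Hence
`m • x` is the only lead point on the ray, and `x = m⁻¹ • (m • x)` is the only decomposition.
-/

section

variable {X : Type*} [AddCommGroup X] [Module ℝ X] {C : Set X}

theorem Balanced.exists_pos_smul_mem_of_mem_span (hbal : Balanced ℝ C) (hconv : Convex ℝ C)
    (hne : C.Nonempty) {x : X} (hx : x ∈ Submodule.span ℝ C) : ∃ t : ℝ, 0 < t ∧ t • x ∈ C := by
  have h0 : (0 : X) ∈ C := hbal.zero_mem hne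
  induction hx using Submodule.span_induction with
  | mem y hy => exact ⟨1, one_pos, by rwa [one_smul]⟩
  | zero => exact ⟨1, one_pos, by rwa [smul_zero]⟩
  | add y z _ _ ihy ihz =>
    obtain ⟨t₁, ht₁, hy⟩ := ihy
    obtain ⟨t₂, ht₂, hz⟩ := ihz
    set s := min t₁ t₂
    have hs : 0 < s := lt_min ht₁ ht₂
    have hsy : s • y ∈ C := hbal.smul_mem_mono hy (by
      simp only [Real.norm_eq_abs, abs_of_pos hs, abs_of_pos ht₁, s, min_le_left])
    have hsz : s • z ∈ C := hbal.smul_mem_mono hz (by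
      simp only [Real.norm_eq_abs, abs_of_pos hs, abs_of_pos ht₂, s, min_le_right])
    refine ⟨s / 2, half_pos hs, ?_⟩
    convert hconv hsy hsz (a := 1 / 2) (b := 1 / 2) (by norm_num) (by norm_num) (by norm_num)
      using 1
    simp only [smul_add, smul_smul]
    ring_nf
  | smul a y _ ihy =>
    obtain ⟨t, ht, hy⟩ := ihy
    rcases eq_or_ne a 0 with rfl | ha
    · exact ⟨1, one_pos, by rwa [zero_smul, smul_zero]⟩
    refine ⟨t / |a|, div_pos ht (abs_pos.mpr ha), ?_⟩
    rw [smul_smul]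
    refine hbal.smul_mem_mono hy (le_of_eq ?_)
    rw [Real.norm_eq_abs, Real.norm_eq_abs, abs_mul, abs_div, abs_abs,
      div_mul_cancel₀ _ (abs_ne_zero.mpr ha)]

theorem LeadPoint.isGreatest_smul {a : ℝ} {x : X} (ha : 0 < a) (hlead : LeadPoint C (a • x)) :
    IsGreatest {α : ℝ | α • x ∈ C} a := by
  refine ⟨hlead.1, fun β hβ => le_of_not_gt fun haβ => ?_⟩
  have hβ0 : 0 < β := ha.trans haβ
  have hfactor : a • x = (a / β) • β • x := by rw [smul_smul, div_mul_cancel₀ _ hβ0.ne']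
  have hratio := (hlead.2 _ hβ (a / β) ⟨by positivity, (div_le_one hβ0).2 haβ.le⟩ hfactor).1
  rw [div_eq_one_iff_eq hβ0.ne'] at hratio
  exact haβ.ne hratio

theorem leadPoint_smul_of_isGreatest {m : ℝ} {x : X} (hx : x ≠ 0) (hm : 0 < m)
    (hgreatest : IsGreatest {α : ℝ | α • x ∈ C} m) : LeadPoint C (m • x) := by
  refine ⟨hgreatest.1, fun y hy l hl hfactor => ?_⟩
  obtain rfl | hl1 := hl.2.eq_or_lt
  · exact ⟨rfl, by rw [hfactor, one_smul]⟩
  exfalso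
  obtain rfl | hl0 := hl.1.eq_or_lt
  · rw [zero_smul, smul_eq_zero] at hfactor
    exact hfactor.elim hm.ne' hx
  -- `y = l⁻¹ • (m • x)` lies on the ray strictly beyond `m • x`.
  have hy' : (l⁻¹ * m) • x ∈ C := by
    rwa [← smul_smul, hfactor, inv_smul_smul₀ hl0.ne']
  have hbeyond : m < l⁻¹ * m := lt_mul_left hm ((one_lt_inv₀ hl0).2 hl1)
  exact (hgreatest.2 hy').not_gt hbeyond

theorem leadPoint_smul_iff_isGreatest {a : ℝ} {x : X} (hx : x ≠ 0) (ha : 0 < a) :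
    LeadPoint C (a • x) ↔ IsGreatest {α : ℝ | α • x ∈ C} a :=
  ⟨LeadPoint.isGreatest_smul ha, leadPoint_smul_of_isGreatest hx ha⟩

end

/-- Every nonzero element of the span of a nonempty, radially compact, absolutely
convex set `C₀` is uniquely `α • c` with `α > 0` and `c` a lead point of `C₀`. -/
theorem stmt2 {X : Type*} [AddCommGroup X] [Module ℝ X] (C₀ : Set X)
    (hne : C₀.Nonempty) (hrc : RadiallyCompact C₀)
    (hconv : Convex ℝ C₀) (hbal : Balanced ℝ C₀) :
    ∀ x ∈ Submodule.span ℝ C₀, x ≠ 0 →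
      ∃! p : ℝ × X, 0 < p.1 ∧ LeadPoint C₀ p.2 ∧ x = p.1 • p.2 := by
  intro x hx hx0
  obtain ⟨t, ht, htx⟩ := hbal.exists_pos_smul_mem_of_mem_span hconv hne hx
  set m := sSup {α : ℝ | α • x ∈ C₀}
  have hgreatest : IsGreatest {α : ℝ | α • x ∈ C₀} m := (hrc x hx0).isGreatest_sSup ⟨t, htx⟩
  have hm : 0 < m := ht.trans_le (hgreatest.2 htx)
  refine ⟨(m⁻¹, m • x), ⟨inv_pos.2 hm, (leadPoint_smul_iff_isGreatest hx0 hm).2 hgreatest,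
    (inv_smul_smul₀ hm.ne' x).symm⟩, ?_⟩
  rintro ⟨α, c⟩ ⟨hα, hc, hxc⟩
  have hcx : c = α⁻¹ • x := by rw [hxc, inv_smul_smul₀ hα.ne']
  rw [hcx] at hc
  have hαm : α⁻¹ = m :=
    ((leadPoint_smul_iff_isGreatest hx0 (inv_pos.2 hα)).1 hc).unique hgreatest
  rw [← hαm, inv_inv, ← hcx]
end

section
/- Let B be a nonempty convex set in a real vector space X with a centre b₀, and suppose B₀ = B - b₀ is radially compact. Then B₀ is balanced and convex. -/
def IsCentre {V : Type*} [AddCommGroup V] [Module ℝ V] (B : Set V) (b₀ : V) : Prop :=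
  b₀ ∈ B ∧ ∀ b ∈ B, ∃ b' ∈ B, b₀ = (1 / 2 : ℝ) • b + (1 / 2 : ℝ) • b'

theorem IsCentre.neg_mem_image_sub {V : Type*} [AddCommGroup V] [Module ℝ V] {B : Set V}
    {b₀ : V} (h : IsCentre B b₀) {x : V} (hx : x ∈ (fun b => b - b₀) '' B) :
    -x ∈ (fun b => b - b₀) '' B := by
  obtain ⟨b, hb, rfl⟩ := hx
  obtain ⟨b', hb', rfl⟩ := h.2 b hb
  exact ⟨b', hb', by module⟩

theorem Convex.image_sub_const {V : Type*} [AddCommGroup V] [Module ℝ V] {B : Set V}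
    (hB : Convex ℝ B) (b₀ : V) : Convex ℝ ((fun b => b - b₀) '' B) := by
  simpa only [sub_eq_neg_add] using hB.translate (-b₀)

theorem stmt5_general {X : Type*} [AddCommGroup X] [Module ℝ X] (B : Set X)
    (hconv : Convex ℝ B) (b₀ : X) (hcentre : IsCentre B b₀) :
    Balanced ℝ ((fun b => b - b₀) '' B) ∧ Convex ℝ ((fun b => b - b₀) '' B) :=
  have hconv₀ := hconv.image_sub_const b₀
  ⟨(balanced_iff_neg_mem hconv₀).2 fun _ => hcentre.neg_mem_image_sub, hconv₀⟩

/-- If `B` is a nonempty convex set with centre `b₀` and `B₀ = B - b₀` is radially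
compact, then `B₀` is balanced and convex. -/
theorem stmt5 {X : Type*} [AddCommGroup X] [Module ℝ X] (B : Set X)
    (hne : B.Nonempty) (hconv : Convex ℝ B) (b₀ : X) (hcentre : IsCentre B b₀)
    (hrc : RadiallyCompact ((fun b => b - b₀) '' B)) :
    Balanced ℝ ((fun b => b - b₀) '' B) ∧ Convex ℝ ((fun b => b - b₀) '' B) :=
  stmt5_general B hconv b₀ hcentre
end

section
/- Let B be a nonempty convex set in a real vector space with centre b₀ such that B₀ = B - b₀ is radially compact. Set K = {x + b₀ : x is a lead point of B₀}. Then for each b ∈ B with b ≠ b₀ there exist a unique pair b₁, b₂ ∈ K with (1/2)b₁ + (1/2)b₂ = b₀ and a unique α with 1/2 < α ≤ 1 such that b = αb₁ + (1-α)b₂. -/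
section LeadPoint

variable {X : Type*} [AddCommGroup X] [Module ℝ X]

theorem leadPoint_smul_iff_isGreatest_s6 {C : Set X} {v : X} (hv : v ≠ 0) {c : ℝ} (hc : 0 < c) :
    LeadPoint C (c • v) ↔ IsGreatest {α : ℝ | α • v ∈ C} c := by
  constructor
  · rintro ⟨hcv, hlead⟩
    refine ⟨hcv, fun s hs => le_of_not_gt fun hcs => ?_⟩
    have hs_pos : 0 < s := hc.trans hcs
    have hscale : c • v = (c / s) • (s • v) := by
      rw [smul_smul, div_mul_cancel₀ c hs_pos.ne']
    have h1 := (hlead _ hs _ ⟨by positivity, (div_le_one hs_pos).2 hcs.le⟩ hscale).1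
    rw [div_eq_one_iff_eq hs_pos.ne'] at h1
    exact hcs.ne h1
  · rintro ⟨hcv, hmax⟩
    refine ⟨hcv, fun y hy l hl hcl => ?_⟩
    have hl_ne : l ≠ 0 := by
      rintro rfl
      rw [zero_smul, smul_eq_zero] at hcl
      exact hcl.elim hc.ne' hv
    have hy_eq : y = (c / l) • v := by
      rw [div_eq_inv_mul, mul_smul, hcl, inv_smul_smul₀ hl_ne]
    have hl_one : l = 1 := by
      have hle : c / l ≤ c := hmax (show (c / l) • v ∈ C from hy_eq ▸ hy)
      rw [div_le_iff₀ (lt_of_le_of_ne hl.1 (Ne.symm hl_ne))] at hle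
      exact le_antisymm hl.2 (le_of_mul_le_mul_left (by linarith) hc)
    subst hl_one
    exact ⟨rfl, by rw [hcl, one_smul]⟩

theorem radialSet_neg_of_neg_mem {C : Set X} (hC : ∀ x ∈ C, -x ∈ C) (v : X) :
    {α : ℝ | α • -v ∈ C} = {α : ℝ | α • v ∈ C} := by
  ext α
  simp only [Set.mem_ofPred_eq, smul_neg]
  exact ⟨fun h => neg_neg (α • v) ▸ hC _ h, hC _⟩

theorem LeadPoint.eq_smul_of_isGreatest {C : Set X} {v x : X} {d m : ℝ} (hx : LeadPoint C x)
    (hv : v ≠ 0) (hvx : v = d • x) (hd : 0 < d) (hm : IsGreatest {α : ℝ | α • v ∈ C} m) :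
    d = m⁻¹ ∧ x = m • v := by
  have hx_eq : x = d⁻¹ • v := by rw [hvx, inv_smul_smul₀ hd.ne']
  rw [hx_eq, leadPoint_smul_iff_isGreatest_s6 hv (inv_pos.2 hd)] at hx
  obtain rfl := hx.unique hm
  exact ⟨(inv_inv d).symm, hx_eq⟩

end LeadPoint

theorem IsCentre.neg_mem_sub {X : Type*} [AddCommGroup X] [Module ℝ X] {B : Set X} {b₀ : X}
    (h : IsCentre B b₀) {x : X} (hx : x ∈ (fun b => b - b₀) '' B) :
    -x ∈ (fun b => b - b₀) '' B := by
  obtain ⟨a, ha, rfl⟩ := hx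
  obtain ⟨a', ha', hmid⟩ := h.2 a ha
  exact ⟨a', ha', by linear_combination (norm := module) (-2 : ℝ) • hmid⟩

theorem stmt6_general {X : Type*} [AddCommGroup X] [Module ℝ X] (B : Set X)
    (b₀ : X) (hcentre : IsCentre B b₀)
    (hrc : RadiallyCompact ((fun b => b - b₀) '' B)) :
    ∀ b ∈ B, b ≠ b₀ →
      ∃! t : X × X × ℝ,
        (∃ x, LeadPoint ((fun b => b - b₀) '' B) x ∧ t.1 = x + b₀) ∧
        (∃ x, LeadPoint ((fun b => b - b₀) '' B) x ∧ t.2.1 = x + b₀) ∧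
        (1 / 2 : ℝ) • t.1 + (1 / 2 : ℝ) • t.2.1 = b₀ ∧
        1 / 2 < t.2.2 ∧ t.2.2 ≤ 1 ∧
        b = t.2.2 • t.1 + (1 - t.2.2) • t.2.1 := by
  intro b hb hbne
  set C := (fun b => b - b₀) '' B
  set v := b - b₀
  have hv : v ≠ 0 := sub_ne_zero.mpr hbne
  have h1 : (1 : ℝ) ∈ {α : ℝ | α • v ∈ C} := by
    simpa only [Set.mem_ofPred_eq, one_smul] using Set.mem_image_of_mem _ hb
  obtain ⟨m, hm⟩ := (hrc v hv).exists_isGreatest ⟨1, h1⟩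
  have hm_pos : 0 < m := one_pos.trans_le (hm.2 h1)
  have hlead : LeadPoint C (m • v) := (leadPoint_smul_iff_isGreatest_s6 hv hm_pos).2 hm
  have hlead_neg : LeadPoint C (-(m • v)) := by
    rw [← smul_neg, leadPoint_smul_iff_isGreatest_s6 (neg_ne_zero.2 hv) hm_pos,
      radialSet_neg_of_neg_mem (fun _ => hcentre.neg_mem_sub)]
    exact hm
  have hm_inv : 0 < m⁻¹ ∧ m⁻¹ ≤ 1 := ⟨inv_pos.2 hm_pos, inv_le_one_of_one_le₀ (hm.2 h1)⟩
  refine ⟨⟨m • v + b₀, -(m • v) + b₀, (1 + m⁻¹) / 2⟩,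
    ⟨⟨_, hlead, rfl⟩, ⟨_, hlead_neg, rfl⟩, by module, by linarith, by linarith, ?_⟩, ?_⟩
  · match_scalars <;> field_simp <;> ring
  · rintro ⟨c₁, c₂, β⟩ ⟨⟨x₁, hx₁, rfl⟩, ⟨x₂, -, rfl⟩, hmid, hβ, -, hb_eq⟩
    obtain rfl : x₂ = -x₁ := by linear_combination (norm := module) (2 : ℝ) • hmid
    obtain ⟨hβ_eq, rfl⟩ := hx₁.eq_smul_of_isGreatest (d := 2 * β - 1) hv
      (by linear_combination (norm := module) hb_eq) (by linarith) hm
    obtain rfl : β = (1 + m⁻¹) / 2 := by linarith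
    rfl

/-- Let `B` be a nonempty convex set with centre `b₀` such that `B₀ = B - b₀` is
radially compact, and let `K = {x + b₀ : x a lead point of B₀}`. Then each `b ∈ B`
with `b ≠ b₀` is uniquely `α b₁ + (1-α) b₂` with `b₁, b₂ ∈ K`,
`(1/2) b₁ + (1/2) b₂ = b₀` and `1/2 < α ≤ 1`. -/
theorem stmt6 {X : Type*} [AddCommGroup X] [Module ℝ X] (B : Set X)
    (hne : B.Nonempty) (hconv : Convex ℝ B) (b₀ : X) (hcentre : IsCentre B b₀)
    (hrc : RadiallyCompact ((fun b => b - b₀) '' B)) :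
    ∀ b ∈ B, b ≠ b₀ →
      ∃! t : X × X × ℝ,
        (∃ x, LeadPoint ((fun b => b - b₀) '' B) x ∧ t.1 = x + b₀) ∧
        (∃ x, LeadPoint ((fun b => b - b₀) '' B) x ∧ t.2.1 = x + b₀) ∧
        (1 / 2 : ℝ) • t.1 + (1 / 2 : ℝ) • t.2.1 = b₀ ∧
        1 / 2 < t.2.2 ∧ t.2.2 ≤ 1 ∧
        b = t.2.2 • t.1 + (1 - t.2.2) • t.2.1 :=
  stmt6_general B b₀ hcentre hrc
end

section
/- Let B be a nonempty convex set in a real vector space with a centre b₀ such that B - b₀ is radially compact. Then b₀ is the only centre of B. -/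
section

variable {X : Type*} [AddCommGroup X] [Module ℝ X]

theorem IsCentre.two_smul_sub_mem {B : Set X} {c b : X} (hc : IsCentre B c) (hb : b ∈ B) :
    (2 : ℝ) • c - b ∈ B := by
  obtain ⟨b', hb', hcb⟩ := hc.2 b hb
  convert hb' using 1
  rw [hcb]
  module

theorem IsCentre.add_two_smul_sub_mem {B : Set X} {b₀ b₁ b : X} (h₀ : IsCentre B b₀)
    (h₁ : IsCentre B b₁) (hb : b ∈ B) : b + (2 : ℝ) • (b₀ - b₁) ∈ B := by
  convert h₀.two_smul_sub_mem (h₁.two_smul_sub_mem hb) using 1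
  module

theorem IsCentre.add_nsmul_two_smul_sub_mem {B : Set X} {b₀ b₁ : X} (h₀ : IsCentre B b₀)
    (h₁ : IsCentre B b₁) (n : ℕ) : b₀ + n • (2 : ℝ) • (b₀ - b₁) ∈ B := by
  induction n with
  | zero => simpa using h₀.1
  | succ n ih => simpa [succ_nsmul, add_assoc] using h₀.add_two_smul_sub_mem h₁ ih

theorem RadiallyCompact.eq_zero_of_forall_nsmul_mem {S : Set X} (hS : RadiallyCompact S) {v : X}
    (hv : ∀ n : ℕ, n • v ∈ S) : v = 0 := by
  by_contra hv0
  obtain ⟨M, hM⟩ := (hS v hv0).bddAbove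
  obtain ⟨n, hn⟩ := exists_nat_gt M
  have hnS : (n : ℝ) ∈ {α : ℝ | α • v ∈ S} := by simpa [Nat.cast_smul_eq_nsmul] using hv n
  exact (hM hnS).not_gt hn

end

theorem stmt7_general {X : Type*} [AddCommGroup X] [Module ℝ X] (B : Set X)
    (b₀ : X) (hcentre : IsCentre B b₀)
    (hrc : RadiallyCompact ((fun b => b - b₀) '' B)) :
    ∀ b₁ : X, IsCentre B b₁ → b₁ = b₀ := by
  intro b₁ hb₁
  have hzero : (2 : ℝ) • (b₀ - b₁) = 0 := hrc.eq_zero_of_forall_nsmul_mem fun n =>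
    ⟨_, hcentre.add_nsmul_two_smul_sub_mem hb₁ n, add_sub_cancel_left _ _⟩
  rw [smul_eq_zero, sub_eq_zero] at hzero
  exact (hzero.resolve_left two_ne_zero).symm

/-- If `B` is a nonempty convex set with centre `b₀` and `B - b₀` is radially
compact, then `b₀` is the only centre of `B`. -/
theorem stmt7 {X : Type*} [AddCommGroup X] [Module ℝ X] (B : Set X)
    (hne : B.Nonempty) (hconv : Convex ℝ B) (b₀ : X) (hcentre : IsCentre B b₀)
    (hrc : RadiallyCompact ((fun b => b - b₀) '' B)) :
    ∀ b₁ : X, IsCentre B b₁ → b₁ = b₀ :=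
  stmt7_general B b₀ hcentre hrc
end

section
/- Let B be a compact convex subset of a real locally convex Hausdorff space with centre b₀, and let A(B) be the space of continuous real-valued affine functions on B with pointwise positive cone A⁺(B). Then A⁺(B) = {f ∈ A(B) : ‖f - f(b₀)·1‖_∞ ≤ f(b₀)}, where 1 is the constant function 1 and ‖·‖_∞ is the sup norm. -/
/-- `f` is affine on `B`. -/
def AffineOn {X : Type*} [AddCommGroup X] [Module ℝ X] (f : X → ℝ) (B : Set X) : Prop :=
  ∀ b₁ ∈ B, ∀ b₂ ∈ B, ∀ t : ℝ, t ∈ Set.Icc (0 : ℝ) 1 →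
    f (t • b₁ + (1 - t) • b₂) = t * f b₁ + (1 - t) * f b₂

/-! Affinity makes `f b₀` the average of `f b` and `f b'` for the reflection `b'` of `b` in the
centre, so for positive `f` the deviation `|f b - f b₀|` is at most `f b₀`. Conversely,
`f b ≥ f b₀ - |f b - f b₀| ≥ 0` once the supremum, finite by compactness and continuity,
is at most `f b₀`. -/

theorem IsCentre.exists_apply_eq_average {X : Type*} [AddCommGroup X] [Module ℝ X]
    {B : Set X} {b₀ : X} (hcentre : IsCentre B b₀) {f : X → ℝ} (haff : AffineOn f B)
    {b : X} (hb : b ∈ B) : ∃ b' ∈ B, f b₀ = (f b + f b') / 2 := by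
  obtain ⟨b', hb', rfl⟩ := hcentre.2 b hb
  refine ⟨b', hb', ?_⟩
  have hhalf := haff b hb b' hb' (1 / 2) ⟨by norm_num, by norm_num⟩
  norm_num at hhalf ⊢
  linarith

lemma abs_sub_average_le {x y : ℝ} (hx : 0 ≤ x) (hy : 0 ≤ y) :
    |x - (x + y) / 2| ≤ (x + y) / 2 := by
  rw [abs_le]
  constructor <;> linarith

theorem stmt8_general {X : Type*} [AddCommGroup X] [Module ℝ X] [TopologicalSpace X]
    (B : Set X) (hcomp : IsCompact B)
    (b₀ : X) (hcentre : IsCentre B b₀)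
    (f : X → ℝ) (hf : ContinuousOn f B) (haff : AffineOn f B) :
    (∀ b ∈ B, 0 ≤ f b) ↔ sSup ((fun b => |f b - f b₀|) '' B) ≤ f b₀ := by
  constructor
  · intro hpos
    refine Real.sSup_le ?_ (hpos b₀ hcentre.1)
    rintro _ ⟨b, hb, rfl⟩
    obtain ⟨b', hb', hmid⟩ := hcentre.exists_apply_eq_average haff hb
    rw [hmid]
    exact abs_sub_average_le (hpos b hb) (hpos b' hb')
  · intro hsup b hb
    have hbdd : BddAbove ((fun b => |f b - f b₀|) '' B) :=
      hcomp.bddAbove_image (hf.sub continuousOn_const).abs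
    have hdev : |f b - f b₀| ≤ f b₀ := (le_csSup hbdd ⟨b, hb, rfl⟩).trans hsup
    linarith [(abs_le.mp hdev).1]

/-- For a compact convex set `B` with centre `b₀` in a real locally convex Hausdorff
space, a continuous affine `f : B → ℝ` is positive iff `‖f - f(b₀)·1‖∞ ≤ f(b₀)`. -/
theorem stmt8 {X : Type*} [AddCommGroup X] [Module ℝ X] [TopologicalSpace X]
    [IsTopologicalAddGroup X] [ContinuousSMul ℝ X] [LocallyConvexSpace ℝ X] [T2Space X]
    (B : Set X) (hcomp : IsCompact B) (hconv : Convex ℝ B)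
    (b₀ : X) (hcentre : IsCentre B b₀)
    (f : X → ℝ) (hf : ContinuousOn f B) (haff : AffineOn f B) :
    (∀ b ∈ B, 0 ≤ f b) ↔ sSup ((fun b => |f b - f b₀|) '' B) ≤ f b₀ :=
  stmt8_general B hcomp b₀ hcentre f hf haff
end

section
/- Let B be a compact convex subset of a real locally convex Hausdorff space with centre b₀. Then for each continuous affine function f : B → ℝ, ‖f‖_∞ = ‖f - f(b₀)·1‖_∞ + |f(b₀)|. -/
/-!
Reflecting through the centre sends `b` to a point `b'` with `f b' - f b₀ = -(f b - f b₀)`, so the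
values of `f` form a compact set of reals symmetric about `c = f b₀`. Take `x` maximising
`|x - c|`; for one of `x` and its mirror image `2c - x` the displacement from `c` has the sign of
`c`, and there `|x| = |x - c| + |c|`. The reverse inequality is the triangle inequality.
-/

open Set

theorem max_abs_add_abs_sub {G : Type*} [AddCommGroup G] [LinearOrder G] [IsOrderedAddMonoid G]
    (a b : G) : max |a + b| |a - b| = |a| + |b| := by
  refine le_antisymm (max_le (abs_add_le a b) (abs_sub _ _)) ?_
  rcases le_total 0 a with ha | ha <;> rcases le_total 0 b with hb | hb
  · exact le_max_of_le_left ((abs_add_eq_add_abs_iff a b).2 (.inl ⟨ha, hb⟩)).ge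
  · refine le_max_of_le_right ?_
    rw [sub_eq_add_neg, ← abs_neg b]
    exact ((abs_add_eq_add_abs_iff a (-b)).2 (.inl ⟨ha, neg_nonneg.2 hb⟩)).ge
  · refine le_max_of_le_right ?_
    rw [sub_eq_add_neg, ← abs_neg b]
    exact ((abs_add_eq_add_abs_iff a (-b)).2 (.inr ⟨ha, neg_nonpos.2 hb⟩)).ge
  · exact le_max_of_le_left ((abs_add_eq_add_abs_iff a b).2 (.inr ⟨ha, hb⟩)).ge

theorem IsCompact.sSup_abs_image_eq_of_symmetric {s : Set ℝ} {c : ℝ} (hs : IsCompact s)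
    (hne : s.Nonempty) (hsymm : ∀ x ∈ s, 2 * c - x ∈ s) :
    sSup ((|·|) '' s) = sSup ((fun x => |x - c|) '' s) + |c| := by
  obtain ⟨x₀, hx₀, hmax⟩ :=
    hs.exists_isMaxOn hne (f := fun x => |x - c|) (by fun_prop)
  have hdist : IsGreatest ((fun x => |x - c|) '' s) |x₀ - c| :=
    ⟨mem_image_of_mem _ hx₀, by rintro _ ⟨x, hx, rfl⟩; exact hmax hx⟩
  have habs : IsGreatest ((|·|) '' s) (|x₀ - c| + |c|) := by
    refine ⟨?_, ?_⟩
    · rw [add_comm, ← max_abs_add_abs_sub c (x₀ - c)]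
      rcases max_choice |c + (x₀ - c)| |c - (x₀ - c)| with h | h <;> rw [h]
      · exact ⟨x₀, hx₀, by ring_nf⟩
      · exact ⟨2 * c - x₀, hsymm x₀ hx₀, by ring_nf⟩
    · rintro _ ⟨x, hx, rfl⟩
      calc |x| = |(x - c) + c| := by rw [sub_add_cancel]
        _ ≤ |x - c| + |c| := abs_add_le _ _
        _ ≤ |x₀ - c| + |c| := add_le_add_left (hmax hx) _
  rw [hdist.csSup_eq, habs.csSup_eq]

theorem IsCentre.exists_apply_eq_two_mul_sub {X : Type*} [AddCommGroup X] [Module ℝ X]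
    {B : Set X} {b₀ : X} (hcentre : IsCentre B b₀) {f : X → ℝ} (haff : AffineOn f B)
    {b : X} (hb : b ∈ B) : ∃ b' ∈ B, f b' = 2 * f b₀ - f b := by
  obtain ⟨b', hb', hmid⟩ := hcentre.2 b hb
  have hf := haff b hb b' hb' (1 / 2) ⟨by norm_num, by norm_num⟩
  rw [show (1 : ℝ) - 1 / 2 = 1 / 2 by norm_num, ← hmid] at hf
  exact ⟨b', hb', by linarith⟩

theorem stmt9_general {X : Type*} [AddCommGroup X] [Module ℝ X] [TopologicalSpace X]
    (B : Set X) (hcomp : IsCompact B)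
    (b₀ : X) (hcentre : IsCentre B b₀)
    (f : X → ℝ) (hf : ContinuousOn f B) (haff : AffineOn f B) :
    sSup ((fun b => |f b|) '' B) = sSup ((fun b => |f b - f b₀|) '' B) + |f b₀| := by
  have hsymm : ∀ y ∈ f '' B, 2 * f b₀ - y ∈ f '' B := by
    rintro _ ⟨b, hb, rfl⟩
    exact hcentre.exists_apply_eq_two_mul_sub haff hb
  have := (hcomp.image_of_continuousOn hf).sSup_abs_image_eq_of_symmetric
    ⟨f b₀, mem_image_of_mem f hcentre.1⟩ hsymm
  simpa only [image_image] using this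

/-- For a compact convex set `B` with centre `b₀` in a real locally convex Hausdorff
space, every continuous affine `f : B → ℝ` satisfies `‖f‖∞ = ‖f - f(b₀)·1‖∞ + |f(b₀)|`. -/
theorem stmt9 {X : Type*} [AddCommGroup X] [Module ℝ X] [TopologicalSpace X]
    [IsTopologicalAddGroup X] [ContinuousSMul ℝ X] [LocallyConvexSpace ℝ X] [T2Space X]
    (B : Set X) (hcomp : IsCompact B) (hconv : Convex ℝ B)
    (b₀ : X) (hcentre : IsCentre B b₀)
    (f : X → ℝ) (hf : ContinuousOn f B) (haff : AffineOn f B) :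
    sSup ((fun b => |f b|) '' B) = sSup ((fun b => |f b - f b₀|) '' B) + |f b₀| :=
  stmt9_general B hcomp b₀ hcentre f hf haff
end

section
/- Let (V, B) be a base normed space with associated functional e, and fix b₀ ∈ B. The following are equivalent: (i) b₀ is a centre of B; (ii) V⁺ = {v ∈ V : ‖v - e(v)b₀‖ ≤ e(v)}; (iii) B = {v ∈ V : e(v) = 1 and ‖v - b₀‖ ≤ 1}. -/
open Set Filter

section Gauge

open scoped Pointwise

variable {E : Type*} [AddCommGroup E] [Module ℝ E] {s : Set E} {x : E}

lemma nonempty_of_gauge_pos (hx : 0 < gauge s x) : {r ∈ Ioi (0 : ℝ) | x ∈ r • s}.Nonempty := by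
  by_contra h
  rw [not_nonempty_iff_eq_empty] at h
  rw [gauge_def, h, Real.sInf_empty] at hx
  exact lt_irrefl 0 hx

lemma exists_lt_smul_mem_of_gauge_lt {a : ℝ} (hx : 0 < gauge s x) (ha : gauge s x < a) :
    ∃ r, 0 < r ∧ r < a ∧ ∃ k ∈ s, x = r • k := by
  obtain ⟨r, ⟨hr, k, hk, rfl⟩, hra⟩ := exists_lt_of_csInf_lt (nonempty_of_gauge_pos hx) ha
  exact ⟨r, hr, hra, k, hk, rfl⟩

lemma abs_le_gauge_of_forall_abs_le_one (f : E →ₗ[ℝ] ℝ) (hf : ∀ y ∈ s, |f y| ≤ 1)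
    (hx : 0 < gauge s x) : |f x| ≤ gauge s x := by
  refine le_csInf (nonempty_of_gauge_pos hx) ?_
  rintro r ⟨hr, k, hk, rfl⟩
  rw [map_smul, smul_eq_mul, abs_mul, abs_of_pos hr]
  simpa using mul_le_mul_of_nonneg_left (hf k hk) (le_of_lt hr)

end Gauge

section Centre

variable {E : Type*} [AddCommGroup E] [Module ℝ E] {B : Set E} {f : E →ₗ[ℝ] ℝ} {b₀ k : E}

lemma abs_le_one_of_mem_convexHull_union_neg (hf : ∀ b ∈ B, f b = 1)
    (hk : k ∈ convexHull ℝ (B ∪ -B)) : |f k| ≤ 1 := by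
  refine convexHull_min ?_ ((convex_Icc (-1 : ℝ) 1).linear_preimage f) hk |> abs_le.2
  rintro y (hy | hy)
  · simp [hf y hy]
  · have := hf (-y) hy
    rw [map_neg] at this
    simp only [mem_preimage, mem_Icc]
    constructor <;> linarith

lemma IsCentre.sub_mem_convexHull_union_neg (hc : IsCentre B b₀) {b : E} (hb : b ∈ B) :
    b - b₀ ∈ convexHull ℝ (B ∪ -B) := by
  obtain ⟨b', hb', rfl⟩ := hc.2 b hb
  have hb'_neg : -b' ∈ convexHull ℝ (B ∪ -B) :=
    subset_convexHull ℝ _ (Or.inr (by simpa using hb'))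
  convert (convex_convexHull ℝ (B ∪ -B)) (subset_convexHull ℝ _ (Or.inl hb)) hb'_neg
    (by norm_num : (0 : ℝ) ≤ 1 / 2) (by norm_num : (0 : ℝ) ≤ 1 / 2) (by norm_num) using 1
  module

lemma IsCentre.add_mem_of_mem_convexHull_union_neg (hc : IsCentre B b₀) (hB : Convex ℝ B)
    (hf : ∀ b ∈ B, f b = 1) (hk : k ∈ convexHull ℝ (B ∪ -B)) (hfk : f k = 0) : b₀ + k ∈ B := by
  rw [hB.convexHull_union hB.neg ⟨b₀, hc.1⟩ ⟨-b₀, by simpa using hc.1⟩, mem_convexJoin] at hk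
  obtain ⟨p, hp, q', hq', a, b, ha, hb, hab, rfl⟩ := hk
  obtain ⟨q₂, hq₂, hq⟩ := hc.2 (-q') hq'
  have hab' : a = b := by
    have := hf (-q') hq'
    simp only [map_add, map_smul, map_neg, smul_eq_mul, hf p hp] at hfk this
    rw [show f q' = -1 by linarith] at hfk
    linarith
  obtain rfl : a = 1 / 2 := by linarith
  obtain rfl : b = 1 / 2 := by linarith
  convert hB hp hq₂ ha ha (by norm_num) using 1
  rw [hq]
  module

lemma IsCentre.add_mem_of_gauge_lt_one (hc : IsCentre B b₀) (hB : Convex ℝ B)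
    (hf : ∀ b ∈ B, f b = 1) {u : E} (hu₀ : 0 < gauge (convexHull ℝ (B ∪ -B)) u)
    (hu₁ : gauge (convexHull ℝ (B ∪ -B)) u < 1) (hfu : f u = 0) : b₀ + u ∈ B := by
  obtain ⟨r, hr₀, hr₁, k, hk, rfl⟩ := exists_lt_smul_mem_of_gauge_lt hu₀ hu₁
  have hfk : f k = 0 := by simpa [hr₀.ne'] using hfu
  exact hB.add_smul_mem hc.1 (hc.add_mem_of_mem_convexHull_union_neg hB hf hk hfk)
    ⟨hr₀.le, hr₁.le⟩

end Centre

section BaseNorm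

variable {V : Type*} [NormedAddCommGroup V] [NormedSpace ℝ V] {C B : Set V} {e : V →ₗ[ℝ] ℝ}
  {b₀ : V}

lemma abs_le_norm_of_norm_eq_gauge (he : ∀ b ∈ B, e b = 1)
    (hnorm : ∀ v : V, ‖v‖ = gauge (convexHull ℝ (B ∪ -B)) v) (v : V) : |e v| ≤ ‖v‖ := by
  rcases eq_or_ne v 0 with rfl | hv
  · simp
  rw [hnorm]
  exact abs_le_gauge_of_forall_abs_le_one e
    (fun k hk => abs_le_one_of_mem_convexHull_union_neg he hk)
    (by rw [← hnorm]; exact norm_pos_iff.2 hv)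

lemma IsCentre.add_mem_of_norm_lt_one (hc : IsCentre B b₀) (hB : Convex ℝ B)
    (he : ∀ b ∈ B, e b = 1) (hnorm : ∀ v : V, ‖v‖ = gauge (convexHull ℝ (B ∪ -B)) v) {u : V}
    (hu : ‖u‖ < 1) (heu : e u = 0) : b₀ + u ∈ B := by
  rcases eq_or_ne u 0 with rfl | hu₀
  · simpa using hc.1
  rw [hnorm] at hu
  exact hc.add_mem_of_gauge_lt_one hB he (by rw [← hnorm]; exact norm_pos_iff.2 hu₀) hu heu

lemma IsCentre.eq_setOf_norm_sub_le_one (hc : IsCentre B b₀) (hB : Convex ℝ B)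
    (hmem : ∀ v, v ∈ B ↔ e v = 1 ∧ ‖v‖ = 1)
    (hnorm : ∀ v : V, ‖v‖ = gauge (convexHull ℝ (B ∪ -B)) v) :
    B = {v | e v = 1 ∧ ‖v - b₀‖ ≤ 1} := by
  have he : ∀ b ∈ B, e b = 1 := fun b hb => ((hmem b).1 hb).1
  ext v
  refine ⟨fun hv => ⟨he v hv, ?_⟩, fun ⟨hev, hv⟩ => (hmem v).2 ⟨hev, le_antisymm ?_ ?_⟩⟩
  · rw [hnorm]
    exact gauge_le_one_of_mem (hc.sub_mem_convexHull_union_neg hv)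
  · have heu : e (v - b₀) = 0 := by simp [hev, he b₀ hc.1]
    have hsegment : ∀ s ∈ Ico (0 : ℝ) 1, ‖b₀ + s • (v - b₀)‖ ≤ 1 := fun s hs =>
      ((hmem _).1 (hc.add_mem_of_norm_lt_one hB he hnorm
        (by rw [norm_smul, Real.norm_of_nonneg hs.1]
            exact mul_lt_one_of_nonneg_of_lt_one_left hs.1 hs.2 hv)
        (by simp [heu]))).2.le
    refine le_of_tendsto ?_ (eventually_of_mem (Ico_mem_nhdsLT one_pos) hsegment)
    exact (Continuous.tendsto' (by fun_prop) 1 _ (by simp)).mono_left nhdsWithin_le_nhds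
  · simpa [hev] using abs_le_norm_of_norm_eq_gauge he hnorm v

lemma isCentre_of_eq_setOf_norm_sub_le_one (hb₀ : b₀ ∈ B)
    (hB : B = {v | e v = 1 ∧ ‖v - b₀‖ ≤ 1}) : IsCentre B b₀ := by
  refine ⟨hb₀, fun b hb => ⟨(2 : ℝ) • b₀ - b, ?_, by module⟩⟩
  rw [hB] at hb hb₀ ⊢
  refine ⟨by simp [hb.1, hb₀.1]; norm_num, ?_⟩
  rw [show (2 : ℝ) • b₀ - b - b₀ = -(b - b₀) by module, norm_neg]
  exact hb.2

lemma cone_eq_setOf_iff_base_eq_setOf (hCsmul : ∀ x ∈ C, ∀ r : ℝ, 0 ≤ r → r • x ∈ C)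
    (hC : ∀ v : V, v ∈ C ↔ e v = ‖v‖) (hB : B = {v | v ∈ C ∧ e v = 1}) :
    C = {v | ‖v - e v • b₀‖ ≤ e v} ↔ B = {v | e v = 1 ∧ ‖v - b₀‖ ≤ 1} := by
  constructor
  · intro hCeq
    ext v
    rw [hB, hCeq, mem_ofPred_eq, mem_ofPred_eq, mem_ofPred_eq, and_comm]
    exact and_congr_right fun hev => by rw [hev, one_smul]
  intro hBeq
  ext v
  rw [mem_ofPred_eq]
  rcases le_or_gt (e v) 0 with hev | hev
  · trans v = 0
    · rw [hC]
      refine ⟨fun h => norm_le_zero_iff.1 (h ▸ hev), by rintro rfl; simp⟩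
    refine ⟨by rintro rfl; simp, fun h => ?_⟩
    obtain hev0 : e v = 0 := le_antisymm hev ((norm_nonneg _).trans h)
    rwa [hev0, zero_smul, sub_zero, norm_le_zero_iff] at h
  have hcone : v ∈ C ↔ (e v)⁻¹ • v ∈ B := by
    rw [hB, mem_ofPred_eq, map_smul, smul_eq_mul, inv_mul_cancel₀ hev.ne', and_iff_left rfl]
    refine ⟨fun h => hCsmul v h _ (inv_nonneg.2 hev.le), fun h => ?_⟩
    simpa [hev.ne'] using hCsmul _ h (e v) hev.le
  rw [hcone, hBeq, mem_ofPred_eq, map_smul, smul_eq_mul, inv_mul_cancel₀ hev.ne',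
    and_iff_right rfl,
    show (e v)⁻¹ • v - b₀ = (e v)⁻¹ • (v - e v • b₀) by
      rw [smul_sub, smul_smul, inv_mul_cancel₀ hev.ne', one_smul],
    norm_smul, Real.norm_of_nonneg (inv_nonneg.2 hev.le), inv_mul_le_iff₀ hev, mul_one]

end BaseNorm

theorem stmt11_general {V : Type*} [NormedAddCommGroup V] [NormedSpace ℝ V]
    (C B : Set V) (e : V →ₗ[ℝ] ℝ)
    (hCsmul : ∀ x ∈ C, ∀ r : ℝ, 0 ≤ r → r • x ∈ C)
    (hBconv : Convex ℝ B)
    (he : ∀ v : V, v ∈ C ↔ e v = ‖v‖)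
    (hB : B = {v | v ∈ C ∧ e v = 1})
    (hnorm : ∀ v : V, ‖v‖ = gauge (convexHull ℝ (B ∪ -B)) v)
    (b₀ : V) (hb₀ : b₀ ∈ B) :
    (IsCentre B b₀ ↔ C = {v : V | ‖v - e v • b₀‖ ≤ e v}) ∧
    (IsCentre B b₀ ↔ B = {v : V | e v = 1 ∧ ‖v - b₀‖ ≤ 1}) := by
  have hmem : ∀ v, v ∈ B ↔ e v = 1 ∧ ‖v‖ = 1 := fun v => by
    rw [hB, mem_ofPred_eq, he]
    constructor <;> intro h <;> constructor <;> linarith [h.1, h.2]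
  have hcentre_iff : IsCentre B b₀ ↔ B = {v : V | e v = 1 ∧ ‖v - b₀‖ ≤ 1} :=
    ⟨fun hc => hc.eq_setOf_norm_sub_le_one hBconv hmem hnorm,
      isCentre_of_eq_setOf_norm_sub_le_one hb₀⟩
  exact ⟨hcentre_iff.trans (cone_eq_setOf_iff_base_eq_setOf hCsmul he hB).symm, hcentre_iff⟩

/-- In a base normed space `(V, B)` with functional `e` and `b₀ ∈ B`, TFAE:
(i) `b₀` is a centre of `B`; (ii) `V⁺ = {v : ‖v - e(v) b₀‖ ≤ e(v)}`;
(iii) `B = {v : e(v) = 1 ∧ ‖v - b₀‖ ≤ 1}`. -/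
theorem stmt11 {V : Type*} [NormedAddCommGroup V] [NormedSpace ℝ V]
    (C B : Set V) (e : V →ₗ[ℝ] ℝ)
    (hCadd : ∀ x ∈ C, ∀ y ∈ C, x + y ∈ C)
    (hCsmul : ∀ x ∈ C, ∀ r : ℝ, 0 ≤ r → r • x ∈ C)
    (hBconv : Convex ℝ B)
    (hbase : ∀ x ∈ C, x ≠ 0 → ∃! p : ℝ × V, 0 < p.1 ∧ p.2 ∈ B ∧ x = p.1 • p.2)
    (he : ∀ v : V, v ∈ C ↔ e v = ‖v‖)
    (hB : B = {v | v ∈ C ∧ e v = 1})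
    (hnorm : ∀ v : V, ‖v‖ = gauge (convexHull ℝ (B ∪ -B)) v)
    (b₀ : V) (hb₀ : b₀ ∈ B) :
    (IsCentre B b₀ ↔ C = {v : V | ‖v - e v • b₀‖ ≤ e v}) ∧
    (IsCentre B b₀ ↔ B = {v : V | e v = 1 ∧ ‖v - b₀‖ ≤ 1}) :=
  stmt11_general C B e hCsmul hBconv he hB hnorm b₀ hb₀
end

section
/- For n ≥ 3, the standard simplex Bₙ = {(αᵢ) ∈ ℝⁿ : αᵢ ≥ 0, Σαᵢ = 1}, regarded as the base of the base normed space ℓ₁ⁿ(ℝ), has no centre. -/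
/-!
Every vertex `eᵢ` of the simplex can be reflected through a centre `b₀` back into the simplex,
so `b₀ᵢ ≥ 1/2` for every coordinate `i`. Summing over the `n` coordinates gives `n / 2 ≤ 1`.
-/

open Finset

theorem IsCentre.half_le_apply {V : Type*} [AddCommGroup V] [Module ℝ V] {B : Set V} {b₀ b : V}
    (hc : IsCentre B b₀) (f : V →ₗ[ℝ] ℝ) (hf : ∀ x ∈ B, 0 ≤ f x) (hb : b ∈ B) :
    f b / 2 ≤ f b₀ := by
  obtain ⟨b', hb', rfl⟩ := hc.2 b hb
  have := hf b' hb'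
  simp only [map_add, map_smul, smul_eq_mul]
  linarith

def stdSimplexLp (p : ENNReal) (ι : Type*) [Fintype ι] : Set (PiLp p fun _ : ι => ℝ) :=
  {x | (∀ i, 0 ≤ x i) ∧ ∑ i, x i = 1}

section StdSimplexLp

variable {p : ENNReal} {ι : Type*} [Fintype ι]

theorem toLp_single_mem_stdSimplexLp [DecidableEq ι] (i : ι) :
    WithLp.toLp p (Pi.single i (1 : ℝ)) ∈ stdSimplexLp p ι :=
  ⟨(Pi.single_nonneg.2 zero_le_one : (0 : ι → ℝ) ≤ Pi.single i 1), by simp⟩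

theorem IsCentre.half_le_apply_of_stdSimplexLp {b₀ : PiLp p fun _ : ι => ℝ}
    (hc : IsCentre (stdSimplexLp p ι) b₀) (i : ι) : 1 / 2 ≤ b₀ i := by
  classical
  simpa using hc.half_le_apply (PiLp.projₗ p (fun _ => ℝ) i) (fun x hx => hx.1 i)
    (toLp_single_mem_stdSimplexLp i)

theorem IsCentre.card_le_two_of_stdSimplexLp {b₀ : PiLp p fun _ : ι => ℝ}
    (hc : IsCentre (stdSimplexLp p ι) b₀) : Fintype.card ι ≤ 2 := by
  have hsum : (Fintype.card ι : ℝ) * (1 / 2) ≤ 1 :=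
    calc (Fintype.card ι : ℝ) * (1 / 2) = ∑ _i : ι, (1 / 2 : ℝ) := by simp
      _ ≤ ∑ i, b₀ i := sum_le_sum fun i _ => hc.half_le_apply_of_stdSimplexLp i
      _ = 1 := hc.1.2
  exact_mod_cast (by linarith : (Fintype.card ι : ℝ) ≤ 2)

end StdSimplexLp

/-- For `n ≥ 3`, the standard simplex, the base of the base normed space `ℓ₁ⁿ(ℝ)`,
has no centre. -/
theorem stmt14 (n : ℕ) (hn : 3 ≤ n) :
    ¬ ∃ b₀ : PiLp 1 (fun _ : Fin n => ℝ),
      IsCentre {x : PiLp 1 (fun _ : Fin n => ℝ) |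
        (∀ i, 0 ≤ x i) ∧ ∑ i, x i = 1} b₀ := by
  rintro ⟨b₀, hc⟩
  have := IsCentre.card_le_two_of_stdSimplexLp (p := 1) hc
  rw [Fintype.card_fin] at this
  omega
end

section
/- Let (V, e) be an order unit space with state space S(V), and let τ ∈ S(V). The following are equivalent: (1) τ is a centre of S(V); (2) v ≤ 2τ(v)e for every v ∈ V⁺; (3) V⁺ = {v ∈ V : ‖v - τ(v)e‖ ≤ τ(v)}. -/
def stateSpace {V : Type*} [AddCommGroup V] [Module ℝ V] [LE V] (e : V) :
    Set (V →ₗ[ℝ] ℝ) :=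
  {f | (∀ v : V, 0 ≤ v → 0 ≤ f v) ∧ f e = 1}

structure IsArchimedeanOrderUnit {V : Type*} [AddCommGroup V] [Module ℝ V] [LE V] (e : V) :
    Prop where
  exists_le_smul : ∀ v : V, ∃ r : ℝ, 0 < r ∧ v ≤ r • e
  nonneg_of_forall_add_smul_nonneg : ∀ v : V, (∀ r : ℝ, 0 < r → 0 ≤ v + r • e) → 0 ≤ v

noncomputable def unitGauge {V : Type*} [AddCommGroup V] [Module ℝ V] [LE V] (e x : V) : ℝ :=
  sInf {r : ℝ | x ≤ r • e}

section OrderedModule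

variable {V : Type*} [AddCommGroup V] [PartialOrder V] [Module ℝ V] {e : V}

theorem IsArchimedeanOrderUnit.nonneg [PosSMulReflectLE ℝ V] (he : IsArchimedeanOrderUnit e) :
    0 ≤ e := by
  obtain ⟨r, hr, hre⟩ := he.exists_le_smul 0
  exact nonneg_of_smul_nonneg_of_pos_left hre hr

variable [IsOrderedAddMonoid V]

theorem isCentre_stateSpace_of_le_two_smul {τ : V →ₗ[ℝ] ℝ} (hτ : τ ∈ stateSpace e)
    (h : ∀ v : V, 0 ≤ v → v ≤ (2 * τ v) • e) : IsCentre (stateSpace e) τ := by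
  refine ⟨hτ, fun f hf => ⟨(2 : ℝ) • τ - f, ⟨fun v hv => ?_, ?_⟩, ?_⟩⟩
  · have hfv : f v ≤ 2 * τ v := by simpa [hf.2] using hf.1 _ (sub_nonneg.2 (h v hv))
    simpa using hfv
  · simp only [LinearMap.sub_apply, LinearMap.smul_apply, hf.2, hτ.2, smul_eq_mul]
    norm_num
  · ext v
    simp only [LinearMap.add_apply, LinearMap.smul_apply, LinearMap.sub_apply, smul_eq_mul]
    ring

theorem IsArchimedeanOrderUnit.le_smul_of_forall_lt (he : IsArchimedeanOrderUnit e) {x : V} {t : ℝ}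
    (h : ∀ s, t < s → x ≤ s • e) : x ≤ t • e := by
  rw [← sub_nonneg]
  refine he.nonneg_of_forall_add_smul_nonneg _ fun r hr => ?_
  rw [sub_add_eq_add_sub, sub_nonneg, ← add_smul]
  exact h _ (lt_add_of_pos_right t hr)

variable [IsOrderedModule ℝ V]

theorem nonneg_of_smul_nonneg_of_ne_zero (he₀ : 0 ≤ e) (he : e ≠ 0) {r : ℝ} (h : 0 ≤ r • e) :
    0 ≤ r := by
  by_contra! hr
  have hre : r • e = 0 := le_antisymm (smul_nonpos_of_nonpos_of_nonneg hr.le he₀) h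
  exact he ((smul_eq_zero.1 hre).resolve_left hr.ne)

namespace IsArchimedeanOrderUnit

theorem bddBelow_setOf_le_smul (he : IsArchimedeanOrderUnit e) (he₀ : e ≠ 0) (x : V) :
    BddBelow {r : ℝ | x ≤ r • e} := by
  obtain ⟨s, -, hs⟩ := he.exists_le_smul (-x)
  refine ⟨-s, fun r hr => ?_⟩
  have hrs : 0 ≤ (r + s) • e := by simpa [add_smul] using add_le_add hr hs
  linarith [nonneg_of_smul_nonneg_of_ne_zero he.nonneg he₀ hrs]

theorem unitGauge_le (he : IsArchimedeanOrderUnit e) (he₀ : e ≠ 0) {x : V} {r : ℝ}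
    (h : x ≤ r • e) : unitGauge e x ≤ r :=
  csInf_le (he.bddBelow_setOf_le_smul he₀ x) h

theorem le_unitGauge_smul (he : IsArchimedeanOrderUnit e) (x : V) :
    x ≤ unitGauge e x • e := by
  refine he.le_smul_of_forall_lt fun s hs => ?_
  obtain ⟨r, -, hr⟩ := he.exists_le_smul x
  obtain ⟨r, hr, hrs⟩ := exists_lt_of_csInf_lt ⟨r, hr⟩ (show sInf _ < s from hs)
  exact hr.trans (smul_le_smul_of_nonneg_right hrs.le he.nonneg)

theorem unitGauge_add_le (he : IsArchimedeanOrderUnit e) (he₀ : e ≠ 0) (x y : V) :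
    unitGauge e (x + y) ≤ unitGauge e x + unitGauge e y :=
  he.unitGauge_le he₀ <| by
    rw [add_smul]; exact add_le_add (he.le_unitGauge_smul x) (he.le_unitGauge_smul y)

theorem unitGauge_smul (he : IsArchimedeanOrderUnit e) (he₀ : e ≠ 0) {c : ℝ} (hc : 0 < c)
    (x : V) : unitGauge e (c • x) = c * unitGauge e x := by
  refine le_antisymm (he.unitGauge_le he₀ ?_) ?_
  · rw [mul_smul]; exact smul_le_smul_of_nonneg_left (he.le_unitGauge_smul x) hc.le
  · rw [← le_div_iff₀' hc]
    refine he.unitGauge_le he₀ ?_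
    have h := smul_le_smul_of_nonneg_left (he.le_unitGauge_smul (c • x)) (inv_nonneg.2 hc.le)
    rwa [inv_smul_smul₀ hc.ne', smul_smul, inv_mul_eq_div] at h

theorem neg_unitGauge_neg_le (he : IsArchimedeanOrderUnit e) (he₀ : e ≠ 0) (x : V) :
    -unitGauge e (-x) ≤ unitGauge e x := by
  have h : 0 ≤ (unitGauge e x + unitGauge e (-x)) • e := by
    simpa [add_smul] using add_le_add (he.le_unitGauge_smul x) (he.le_unitGauge_smul (-x))
  linarith [nonneg_of_smul_nonneg_of_ne_zero he.nonneg he₀ h]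

theorem exists_mem_stateSpace_apply_eq_unitGauge (he : IsArchimedeanOrderUnit e)
    (he₀ : e ≠ 0) {v : V} (hv : v ≠ 0) : ∃ g ∈ stateSpace e, g v = unitGauge e v := by
  let f : V →ₗ.[ℝ] ℝ := LinearPMap.mkSpanSingleton v (unitGauge e v) hv
  have hf : ∀ x : f.domain, f x ≤ unitGauge e x := by
    rintro ⟨x, hx⟩
    obtain ⟨c, rfl⟩ := Submodule.mem_span_singleton.1 (show x ∈ Submodule.span ℝ {v} from hx)
    rw [LinearPMap.mkSpanSingleton'_apply, RingHom.id_apply, smul_eq_mul]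
    rcases lt_trichotomy c 0 with hc | rfl | hc
    · have h := he.neg_unitGauge_neg_le he₀ (c • v)
      rwa [← neg_smul, he.unitGauge_smul he₀ (neg_pos.2 hc), neg_mul, neg_neg] at h
    · simpa using he.neg_unitGauge_neg_le he₀ 0
    · rw [he.unitGauge_smul he₀ hc]
  obtain ⟨g, hgf, hg⟩ := exists_extension_of_le_sublinear f (unitGauge e)
    (fun c hc x => he.unitGauge_smul he₀ hc x) (he.unitGauge_add_le he₀) hf
  refine ⟨g, ⟨fun x hx => ?_, ?_⟩, ?_⟩
  · have h := hg (-x)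
    have h0 : unitGauge e (-x) ≤ 0 := he.unitGauge_le he₀ (by simpa using hx)
    rw [map_neg] at h
    linarith
  · have h1 := hg e
    have h2 := hg (-e)
    have h1' : unitGauge e e ≤ 1 := he.unitGauge_le he₀ (by rw [one_smul])
    have h2' : unitGauge e (-e) ≤ -1 := he.unitGauge_le he₀ (by rw [neg_one_smul])
    rw [map_neg] at h2
    linarith
  · exact (hgf ⟨v, Submodule.mem_span_singleton_self v⟩).trans
      (LinearPMap.mkSpanSingleton_apply ℝ ℝ hv _)

theorem le_two_smul_of_isCentre_stateSpace (he : IsArchimedeanOrderUnit e) {τ : V →ₗ[ℝ] ℝ}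
    (hc : IsCentre (stateSpace e) τ) {v : V} (hv : 0 ≤ v) : v ≤ (2 * τ v) • e := by
  rcases eq_or_ne v 0 with rfl | hv₀
  · simp
  have he₀ : e ≠ 0 := fun h => by simpa [h] using hc.1.2
  obtain ⟨g, hg, hgv⟩ := he.exists_mem_stateSpace_apply_eq_unitGauge he₀ hv₀
  obtain ⟨g', hg', hτ⟩ := hc.2 g hg
  have hτv : τ v = g v / 2 + g' v / 2 := by
    rw [hτ]; simp only [LinearMap.add_apply, LinearMap.smul_apply, smul_eq_mul]; ring
  have hgauge : unitGauge e v ≤ 2 * τ v := by linarith [hg'.1 v hv]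
  exact (he.le_unitGauge_smul v).trans (smul_le_smul_of_nonneg_right hgauge he.nonneg)

variable [Norm V]

theorem norm_le_iff (he : IsArchimedeanOrderUnit e)
    (hnorm : ∀ v : V, ‖v‖ = sInf {r : ℝ | 0 < r ∧ -(r • e) ≤ v ∧ v ≤ r • e}) {x : V} {t : ℝ}
    (ht : 0 ≤ t) : ‖x‖ ≤ t ↔ -(t • e) ≤ x ∧ x ≤ t • e := by
  constructor
  · intro hx
    obtain ⟨r₁, hr₁, h₁⟩ := he.exists_le_smul x
    obtain ⟨r₂, hr₂, h₂⟩ := he.exists_le_smul (-x)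
    have hne : {r : ℝ | 0 < r ∧ -(r • e) ≤ x ∧ x ≤ r • e}.Nonempty :=
      ⟨r₁ + r₂, add_pos hr₁ hr₂,
        neg_le.1 (h₂.trans (smul_le_smul_of_nonneg_right (by linarith) he.nonneg)),
        h₁.trans (smul_le_smul_of_nonneg_right (by linarith) he.nonneg)⟩
    have h : ∀ s, t < s → -(s • e) ≤ x ∧ x ≤ s • e := fun s hs => by
      obtain ⟨r, ⟨-, hr₁, hr₂⟩, hrs⟩ := exists_lt_of_csInf_lt hne (hnorm x ▸ hx.trans_lt hs)
      have hre := smul_le_smul_of_nonneg_right hrs.le he.nonneg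
      exact ⟨(neg_le_neg hre).trans hr₁, hr₂.trans hre⟩
    exact ⟨neg_le.1 (he.le_smul_of_forall_lt fun s hs => neg_le.1 (h s hs).1),
      he.le_smul_of_forall_lt fun s hs => (h s hs).2⟩
  · rintro ⟨h₁, h₂⟩
    rw [hnorm]
    refine le_of_forall_pos_le_add fun ε hε => csInf_le ⟨0, fun r hr => hr.1.le⟩ ?_
    have hte := smul_le_smul_of_nonneg_right (lt_add_of_pos_right t hε).le he.nonneg
    exact ⟨by linarith, (neg_le_neg hte).trans h₁, h₂.trans hte⟩

theorem norm_sub_smul_le_iff (he : IsArchimedeanOrderUnit e)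
    (hnorm : ∀ v : V, ‖v‖ = sInf {r : ℝ | 0 < r ∧ -(r • e) ≤ v ∧ v ≤ r • e}) {v : V} {t : ℝ}
    (ht : 0 ≤ t) : ‖v - t • e‖ ≤ t ↔ 0 ≤ v ∧ v ≤ (2 * t) • e := by
  rw [he.norm_le_iff hnorm ht, neg_le_sub_iff_le_add, le_add_iff_nonneg_left, sub_le_iff_le_add,
    two_mul, add_smul]

theorem setOf_nonneg_eq_iff (he : IsArchimedeanOrderUnit e)
    (hnorm : ∀ v : V, ‖v‖ = sInf {r : ℝ | 0 < r ∧ -(r • e) ≤ v ∧ v ≤ r • e}) {τ : V → ℝ}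
    (hτ : ∀ v : V, 0 ≤ v → 0 ≤ τ v) :
    {v : V | 0 ≤ v} = {v : V | ‖v - τ v • e‖ ≤ τ v} ↔ ∀ v : V, 0 ≤ v → v ≤ (2 * τ v) • e := by
  have nonneg_of_norm_le {v : V} (hv : ‖v - τ v • e‖ ≤ τ v) : 0 ≤ τ v := by
    refine le_trans ?_ hv
    rw [hnorm]
    exact Real.sInf_nonneg fun r hr => hr.1.le
  constructor
  · intro h v hv
    have hv' : ‖v - τ v • e‖ ≤ τ v := (Set.ext_iff.1 h v).1 hv
    exact ((he.norm_sub_smul_le_iff hnorm (nonneg_of_norm_le hv')).1 hv').2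
  · intro h
    ext v
    exact ⟨fun hv => (he.norm_sub_smul_le_iff hnorm (hτ v hv)).2 ⟨hv, h v hv⟩,
      fun hv => ((he.norm_sub_smul_le_iff hnorm (nonneg_of_norm_le hv)).1 hv).1⟩

end IsArchimedeanOrderUnit

end OrderedModule

/-- For a state `τ` on an order unit space `(V, e)`, TFAE: (1) `τ` is a centre of the
state space; (2) `v ≤ 2 τ(v) e` for every `v ≥ 0`;
(3) `V⁺ = {v : ‖v - τ(v) e‖ ≤ τ(v)}`. -/
theorem stmt15 {V : Type*} [NormedAddCommGroup V] [NormedSpace ℝ V] [PartialOrder V]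
    [CovariantClass V V (· + ·) (· ≤ ·)]
    (e : V)
    (hsmulpos : ∀ (r : ℝ) (v : V), 0 ≤ r → 0 ≤ v → 0 ≤ r • v)
    (hArch : ∀ v : V, (∀ r : ℝ, 0 < r → 0 ≤ v + r • e) → 0 ≤ v)
    (hunit : ∀ v : V, ∃ r : ℝ, 0 < r ∧ v ≤ r • e)
    (hnorm : ∀ v : V, ‖v‖ = sInf {r : ℝ | 0 < r ∧ -(r • e) ≤ v ∧ v ≤ r • e})
    (τ : V →ₗ[ℝ] ℝ) (hτpos : ∀ v : V, 0 ≤ v → 0 ≤ τ v) (hτe : τ e = 1) :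
    (IsCentre {f : V →ₗ[ℝ] ℝ | (∀ v : V, 0 ≤ v → 0 ≤ f v) ∧ f e = 1} τ ↔
      ∀ v : V, 0 ≤ v → v ≤ (2 * τ v) • e) ∧
    (IsCentre {f : V →ₗ[ℝ] ℝ | (∀ v : V, 0 ≤ v → 0 ≤ f v) ∧ f e = 1} τ ↔
      {v : V | 0 ≤ v} = {v : V | ‖v - τ v • e‖ ≤ τ v}) := by
  have : IsOrderedAddMonoid V := { add_le_add_left := fun _ _ h c => add_le_add_left h c }
  have : IsOrderedModule ℝ V := .of_smul_nonneg fun r hr v hv => hsmulpos r v hr hv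
  have he : IsArchimedeanOrderUnit e := ⟨hunit, hArch⟩
  have hcentre : IsCentre (stateSpace e) τ ↔ ∀ v : V, 0 ≤ v → v ≤ (2 * τ v) • e :=
    ⟨fun hc _ => he.le_two_smul_of_isCentre_stateSpace hc,
      isCentre_stateSpace_of_le_two_smul ⟨hτpos, hτe⟩⟩
  exact ⟨hcentre, hcentre.trans (he.setOf_nonneg_eq_iff hnorm hτpos).symm⟩
end

section
/- Let (V, e) be an order unit space with a central state τ. Then for each v ∈ V and each α ∈ ℝ, ‖v - τ(v)e‖ ≤ ‖v - αe‖; i.e., τ(v)e is a best approximation to v from ℝe. -/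
/-!
Write `x = v - τ(v) e`, so that `τ x = 0` and `v - α e = x + β e` with `β = τ(v) - α`.
Centrality gives: if `τ y = 0` and `0 ≤ y + c e`, then `y + c e ≤ 2 τ(y + c e) e = 2c e`, i.e.
`y ≤ c e`. Applied twice to each of `x` and `-x`, this turns `-r e ≤ x + β e ≤ r e` into
`±x ≤ (r + β) e` and `±x ≤ (r - β) e`, hence `-r e ≤ x ≤ r e`. So every radius admissible for
`v - α e` is admissible for `v - τ(v) e`, and the infimum defining the norm can only drop.
-/

def orderUnitRadii {V : Type*} [AddCommGroup V] [PartialOrder V] [Module ℝ V] (e v : V) :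
    Set ℝ :=
  {r | 0 < r ∧ -(r • e) ≤ v ∧ v ≤ r • e}

section OrderedVectorSpace

variable {V : Type*} [AddCommGroup V] [PartialOrder V] [IsOrderedAddMonoid V] [Module ℝ V]
  {e : V} {τ : V →ₗ[ℝ] ℝ}

theorem orderUnitRadii_nonempty [PosSMulMono ℝ V] (hunit : ∀ v : V, ∃ r : ℝ, 0 < r ∧ v ≤ r • e)
    (he : 0 ≤ e) (v : V) : (orderUnitRadii e v).Nonempty := by
  obtain ⟨r₁, hr₁, hv⟩ := hunit v
  obtain ⟨r₂, -, hnegv⟩ := hunit (-v)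
  refine ⟨max r₁ r₂, lt_max_of_lt_left hr₁, ?_, ?_⟩
  · exact neg_le.mp (hnegv.trans (smul_le_smul_of_nonneg_right (le_max_right _ _) he))
  · exact hv.trans (smul_le_smul_of_nonneg_right (le_max_left _ _) he)

variable (hτe : τ e = 1) (hcentral : ∀ v : V, 0 ≤ v → v ≤ (2 * τ v) • e)
include hτe hcentral

theorem le_smul_of_central {y : V} {c : ℝ} (hy : τ y = 0) (h : 0 ≤ y + c • e) : y ≤ c • e := by
  have := hcentral _ h
  rw [map_add, map_smul, hy, hτe, smul_eq_mul, mul_one, zero_add, two_mul, add_smul] at this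
  exact le_of_add_le_add_right this

theorem le_smul_add_and_le_smul_sub_of_central {x : V} {r β : ℝ} (hx : τ x = 0)
    (hlow : -(r • e) ≤ x + β • e) (hup : x + β • e ≤ r • e) :
    x ≤ (r + β) • e ∧ x ≤ (r - β) • e := by
  have hnegx : τ (-x) = 0 := by rw [map_neg, hx, neg_zero]
  have hneg : -x ≤ (r - β) • e := le_smul_of_central hτe hcentral hnegx <|
    calc 0 ≤ r • e - (x + β • e) := sub_nonneg.mpr hup
      _ = -x + (r - β) • e := by rw [sub_smul]; abel
  refine ⟨le_smul_of_central hτe hcentral hx ?_,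
    le_smul_of_central hτe hcentral hx (neg_le_iff_add_nonneg'.mp hneg)⟩
  calc 0 ≤ x + β • e + r • e := neg_le_iff_add_nonneg.mp hlow
    _ = x + (r + β) • e := by rw [add_smul]; abel

theorem orderUnitRadii_add_smul_subset [PosSMulMono ℝ V] (he : 0 ≤ e) {x : V} (hx : τ x = 0)
    (β : ℝ) : orderUnitRadii e (x + β • e) ⊆ orderUnitRadii e x := by
  rintro r ⟨hr, hlow, hup⟩
  obtain ⟨hx₁, hx₂⟩ := le_smul_add_and_le_smul_sub_of_central hτe hcentral hx hlow hup
  obtain ⟨hnegx₁, hnegx₂⟩ := le_smul_add_and_le_smul_sub_of_central (x := -x) (r := r) (β := -β)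
    hτe hcentral (by rw [map_neg, hx, neg_zero])
    (by rw [neg_smul, ← neg_add]; exact neg_le_neg hup)
    (by rw [neg_smul, ← neg_add]; exact neg_le.mp hlow)
  have hmono {s : ℝ} (hs : s ≤ r) : s • e ≤ r • e := smul_le_smul_of_nonneg_right hs he
  rcases le_total 0 β with hβ | hβ
  · exact ⟨hr, neg_le.mp (hnegx₁.trans (hmono (by linarith))), hx₂.trans (hmono (by linarith))⟩
  · exact ⟨hr, neg_le.mp (hnegx₂.trans (hmono (by linarith))), hx₁.trans (hmono (by linarith))⟩

end OrderedVectorSpace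

theorem stmt16_general {V : Type*} [NormedAddCommGroup V] [NormedSpace ℝ V] [PartialOrder V]
    [CovariantClass V V (· + ·) (· ≤ ·)]
    (e : V)
    (hsmulpos : ∀ (r : ℝ) (v : V), 0 ≤ r → 0 ≤ v → 0 ≤ r • v)
    (hunit : ∀ v : V, ∃ r : ℝ, 0 < r ∧ v ≤ r • e)
    (hnorm : ∀ v : V, ‖v‖ = sInf {r : ℝ | 0 < r ∧ -(r • e) ≤ v ∧ v ≤ r • e})
    (τ : V →ₗ[ℝ] ℝ) (hτe : τ e = 1)
    (hcentral : ∀ v : V, 0 ≤ v → v ≤ (2 * τ v) • e) :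
    ∀ (v : V) (α : ℝ), ‖v - τ v • e‖ ≤ ‖v - α • e‖ := by
  have : IsOrderedAddMonoid V :=
    { add_le_add_left := fun a b h c => by rw [add_comm a, add_comm b]; exact add_le_add_right h c }
  have : PosSMulMono ℝ V := PosSMulMono.of_smul_nonneg fun r hr v hv => hsmulpos r v hr hv
  have he : 0 ≤ e := by
    obtain ⟨r, hr, hre⟩ := hunit 0
    exact nonneg_of_smul_nonneg_of_pos_left hre hr
  intro v α
  have hx : τ (v - τ v • e) = 0 := by simp [hτe]
  have hshift : v - α • e = (v - τ v • e) + (τ v - α) • e := by rw [sub_smul]; abel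
  rw [hnorm (v - τ v • e), hshift, hnorm]
  exact csInf_le_csInf ⟨0, fun _ hr => hr.1.le⟩ (orderUnitRadii_nonempty hunit he _)
    (orderUnitRadii_add_smul_subset hτe hcentral he hx _)

/-- In an order unit space `(V, e)` with central state `τ`, `τ(v) e` is a best
approximation to `v` from `ℝ e`: `‖v - τ(v) e‖ ≤ ‖v - α e‖` for all `α`. -/
theorem stmt16 {V : Type*} [NormedAddCommGroup V] [NormedSpace ℝ V] [PartialOrder V]
    [CovariantClass V V (· + ·) (· ≤ ·)]
    (e : V)
    (hsmulpos : ∀ (r : ℝ) (v : V), 0 ≤ r → 0 ≤ v → 0 ≤ r • v)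
    (hArch : ∀ v : V, (∀ r : ℝ, 0 < r → 0 ≤ v + r • e) → 0 ≤ v)
    (hunit : ∀ v : V, ∃ r : ℝ, 0 < r ∧ v ≤ r • e)
    (hnorm : ∀ v : V, ‖v‖ = sInf {r : ℝ | 0 < r ∧ -(r • e) ≤ v ∧ v ≤ r • e})
    (τ : V →ₗ[ℝ] ℝ) (hτpos : ∀ v : V, 0 ≤ v → 0 ≤ τ v) (hτe : τ e = 1)
    (hcentral : ∀ v : V, 0 ≤ v → v ≤ (2 * τ v) • e) :
    ∀ (v : V) (α : ℝ), ‖v - τ v • e‖ ≤ ‖v - α • e‖ :=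
  stmt16_general e hsmulpos hunit hnorm τ hτe hcentral
end

section
/- Let (V, B) be a base normed space with centre b₀ of B and associated functional e, and let K = {u + b₀ : e(u) = 0, ‖u‖ = 1}. Then for each v ∈ V not in ℝb₀ there exist k ∈ K and α, β ∈ ℝ with v = αk + βk', where k' = 2b₀ - k; and this representation is unique up to swapping (k, α, β) with (k', β, α). -/
/-!
Since `b₀ ∈ B`, `e b₀ = 1` and `V = ker e ⊕ ℝ b₀`; writing `k = u + b₀` turns
`α k + β k'` into `(α - β) u + (α + β) b₀`. So `α + β = e v`, and `(α - β) u` is the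
nonzero `ker e`-component of `v`; as `‖u‖ = 1` this fixes `α - β` and `u` up to a common sign,
and the sign change is exactly the swap `(k, α, β) ↔ (k', β, α)`.
-/

section

variable {V : Type*}

theorem smul_add_smul_two_smul_sub [AddCommGroup V] [Module ℝ V] (u b : V) (α β : ℝ) :
    α • (u + b) + β • ((2 : ℝ) • b - (u + b)) = (α - β) • u + (α + β) • b := by
  module

theorem eq_and_eq_of_add_smul_eq_add_smul [AddCommGroup V] [Module ℝ V] {e : V →ₗ[ℝ] ℝ}
    {b x y : V} {a c : ℝ} (hb : e b = 1) (hx : e x = 0) (hy : e y = 0)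
    (h : x + a • b = y + c • b) : x = y ∧ a = c := by
  have hac : a = c := by simpa [hb, hx, hy] using congrArg e h
  subst hac
  exact ⟨add_right_cancel h, rfl⟩

variable [NormedAddCommGroup V] [NormedSpace ℝ V]

theorem eq_or_eq_neg_of_smul_eq_smul_of_norm_eq_one {x y : V} {a c : ℝ} (hx : ‖x‖ = 1)
    (hy : ‖y‖ = 1) (ha : a ≠ 0) (h : a • x = c • y) :
    (c = a ∧ y = x) ∨ (c = -a ∧ y = -x) := by
  have habs : |c| = |a| := by simpa [norm_smul, hx, hy] using (congrArg norm h).symm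
  rcases abs_eq_abs.mp habs with rfl | rfl
  · exact .inl ⟨rfl, (smul_right_injective V ha h).symm⟩
  · refine .inr ⟨rfl, smul_right_injective V ha ?_⟩
    simp only [h, smul_neg, neg_smul, neg_neg]

theorem exists_eq_smul_add_smul_two_smul_sub {e : V →ₗ[ℝ] ℝ} {b v : V} (hb : e b = 1)
    (hv : ∀ r : ℝ, v ≠ r • b) :
    ∃ x, e x = 0 ∧ ‖x‖ = 1 ∧ ∃ α β : ℝ, α ≠ β ∧
      v = α • (x + b) + β • ((2 : ℝ) • b - (x + b)) := by
  set u := v - e v • b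
  have hu : e u = 0 := by simp [u, hb]
  have hs : 0 < ‖u‖ := norm_pos_iff.mpr (sub_ne_zero.mpr (hv (e v)))
  refine ⟨‖u‖⁻¹ • u, by simp [hu], by simp [norm_smul, hs.ne'],
    (e v + ‖u‖) / 2, (e v - ‖u‖) / 2, by linarith, ?_⟩
  rw [smul_add_smul_two_smul_sub, smul_smul]
  have hcoef : ((e v + ‖u‖) / 2 - (e v - ‖u‖) / 2) * ‖u‖⁻¹ = 1 := by field_simp; ring
  have hsum : (e v + ‖u‖) / 2 + (e v - ‖u‖) / 2 = e v := by ring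
  rw [hcoef, one_smul, hsum, sub_add_cancel]

theorem smul_add_smul_two_smul_sub_injective {e : V →ₗ[ℝ] ℝ} {b x y : V} {α β γ δ : ℝ}
    (hb : e b = 1) (hx : e x = 0) (hy : e y = 0) (hnx : ‖x‖ = 1) (hny : ‖y‖ = 1)
    (hαβ : α ≠ β)
    (h : α • (x + b) + β • ((2 : ℝ) • b - (x + b)) =
      γ • (y + b) + δ • ((2 : ℝ) • b - (y + b))) :
    (y + b = x + b ∧ γ = α ∧ δ = β) ∨
      (y + b = (2 : ℝ) • b - (x + b) ∧ γ = β ∧ δ = α) := by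
  rw [smul_add_smul_two_smul_sub, smul_add_smul_two_smul_sub] at h
  obtain ⟨hdiff, hsum⟩ := eq_and_eq_of_add_smul_eq_add_smul hb
    (by simp [hx]) (by simp [hy]) h
  rcases eq_or_eq_neg_of_smul_eq_smul_of_norm_eq_one hnx hny (sub_ne_zero.mpr hαβ) hdiff with
    ⟨hc, rfl⟩ | ⟨hc, rfl⟩
  · exact .inl ⟨rfl, by linarith, by linarith⟩
  · exact .inr ⟨by module, by linarith, by linarith⟩

end

theorem stmt18_general {V : Type*} [NormedAddCommGroup V] [NormedSpace ℝ V]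
    (C B : Set V) (e : V →ₗ[ℝ] ℝ)
    (hB : B = {v | v ∈ C ∧ e v = 1})
    (b₀ : V) (hcentre : IsCentre B b₀) :
    ∀ v : V, (∀ r : ℝ, v ≠ r • b₀) →
      ∃ k ∈ {k : V | ∃ u : V, e u = 0 ∧ ‖u‖ = 1 ∧ k = u + b₀}, ∃ α β : ℝ,
        v = α • k + β • ((2 : ℝ) • b₀ - k) ∧
        ∀ k₁ ∈ {k : V | ∃ u : V, e u = 0 ∧ ‖u‖ = 1 ∧ k = u + b₀}, ∀ lam mu : ℝ,
          v = lam • k₁ + mu • ((2 : ℝ) • b₀ - k₁) →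
          (k₁ = k ∧ lam = α ∧ mu = β) ∨
          (k₁ = (2 : ℝ) • b₀ - k ∧ lam = β ∧ mu = α) := by
  intro v hv
  have hb₀ : e b₀ = 1 := by
    have h := hcentre.1
    rw [hB] at h
    exact h.2
  obtain ⟨x, hx, hnx, α, β, hαβ, rfl⟩ := exists_eq_smul_add_smul_two_smul_sub hb₀ hv
  refine ⟨x + b₀, ⟨x, hx, hnx, rfl⟩, α, β, rfl, ?_⟩
  rintro _ ⟨y, hy, hny, rfl⟩ lam mu h
  exact smul_add_smul_two_smul_sub_injective hb₀ hx hy hnx hny hαβ h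

/-- In a base normed space `(V, B)` with centre `b₀` of `B` and
`K = {u + b₀ : e(u) = 0, ‖u‖ = 1}`, every `v ∉ ℝ b₀` is `α k + β k'` with `k ∈ K`
and `k' = 2 b₀ - k`, uniquely up to swapping `(k, α, β)` with `(k', β, α)`. -/
theorem stmt18 {V : Type*} [NormedAddCommGroup V] [NormedSpace ℝ V]
    (C B : Set V) (e : V →ₗ[ℝ] ℝ)
    (hCadd : ∀ x ∈ C, ∀ y ∈ C, x + y ∈ C)
    (hCsmul : ∀ x ∈ C, ∀ r : ℝ, 0 ≤ r → r • x ∈ C)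
    (hBconv : Convex ℝ B)
    (hbase : ∀ x ∈ C, x ≠ 0 → ∃! p : ℝ × V, 0 < p.1 ∧ p.2 ∈ B ∧ x = p.1 • p.2)
    (he : ∀ v : V, v ∈ C ↔ e v = ‖v‖)
    (hB : B = {v | v ∈ C ∧ e v = 1})
    (hnorm : ∀ v : V, ‖v‖ = gauge (convexHull ℝ (B ∪ -B)) v)
    (b₀ : V) (hcentre : IsCentre B b₀) :
    ∀ v : V, (∀ r : ℝ, v ≠ r • b₀) →
      ∃ k ∈ {k : V | ∃ u : V, e u = 0 ∧ ‖u‖ = 1 ∧ k = u + b₀}, ∃ α β : ℝ,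
        v = α • k + β • ((2 : ℝ) • b₀ - k) ∧
        ∀ k₁ ∈ {k : V | ∃ u : V, e u = 0 ∧ ‖u‖ = 1 ∧ k = u + b₀}, ∀ lam mu : ℝ,
          v = lam • k₁ + mu • ((2 : ℝ) • b₀ - k₁) →
          (k₁ = k ∧ lam = α ∧ mu = β) ∨
          (k₁ = (2 : ℝ) • b₀ - k ∧ lam = β ∧ mu = α) :=
  stmt18_general C B e hB b₀ hcentre
end
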